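/- Any continuous linear functional λ on ℓ∞ vanishing on ℓ¹ defines a trace on the Lie algebra 𝔤: the map X ↦ λ((X_{nn})_{n}) applied to the bounded sequence of diagonal matrix entries satisfies λ([X,Y]_diag) = 0 for all X,Y ∈ 𝔤, i.e. it vanishes on commutators. -/

import Mathlib

noncomputable section

open scoped ENNReal

/-- The Hilbert space `ℓ²(ℤ, ℂ)` with orthonormal basis `(e n)_{n ∈ ℤ}`. -/
abbrev H : Type := lp (fun _ : ℤ => ℂ) 2

/-- The standard orthonormal basis vectors. -/
def e (n : ℤ) : H := lp.single 2 n (1 : ℂ)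

lemma norm_e (n : ℤ) : ‖e n‖ = 1 := by
  rw [show e n = lp.single 2 n ((fun _ : ℤ => (1 : ℂ)) n) from rfl,
    lp.norm_single (E := fun _ : ℤ => ℂ) (p := 2) (by norm_num) n]
  simp

/-- The matrix entry `⟨e i, X (e j)⟩` of a bounded operator. -/
def entry (X : H →L[ℂ] H) (i j : ℤ) : ℂ := inner ℂ (e i) (X (e j))

/-- Membership in `𝔤`: bounded operators `X` with `[D, X]` Hilbert–Schmidt,
where `D e_n = n e_n`, i.e. `Σ |(i-j) X_{ij}|² < ∞`. -/
def InG (X : H →L[ℂ] H) : Prop :=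
  Summable (fun p : ℤ × ℤ => ‖((p.1 : ℂ) - (p.2 : ℂ)) * entry X p.1 p.2‖ ^ 2)

/-- The bounded sequence of diagonal matrix entries of a bounded operator,
as an element of `ℓ∞(ℤ, ℂ)`. -/
def diag (X : H →L[ℂ] H) : lp (fun _ : ℤ => ℂ) ⊤ :=
  ⟨fun n => entry X n n, by
    apply memℓp_infty
    refine ⟨‖X‖, ?_⟩
    rintro - ⟨n, rfl⟩
    calc ‖entry X n n‖ ≤ ‖e n‖ * ‖X (e n)‖ := norm_inner_le_norm _ _
      _ ≤ ‖e n‖ * (‖X‖ * ‖e n‖) := by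
          gcongr; exact X.le_opNorm _
      _ = ‖X‖ := by rw [norm_e]; ring⟩

/-! The `n`-th diagonal entry of `[X, Y]` is `∑ₖ (X_{nk} Y_{kn} - Y_{nk} X_{kn})`. The `k = n`
term vanishes, and for `k ≠ n` the term is bounded by
`|n - k| ‖X_{nk}‖ · |k - n| ‖Y_{kn}‖ + |n - k| ‖Y_{nk}‖ · |k - n| ‖X_{kn}‖`, a sum of products
of entries of the Hilbert–Schmidt operators `[D, X]` and `[D, Y]`. By AM–GM this bound is
summable over `ℤ × ℤ`, so the diagonal of `[X, Y]` lies in `ℓ¹`, where `Λ` vanishes. -/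

theorem Summable.mul_of_summable_sq {ι : Type*} {u v : ι → ℝ} (hu : Summable fun i => u i ^ 2)
    (hv : Summable fun i => v i ^ 2) : Summable fun i => u i * v i := by
  refine ((hu.add hv).div_const 2).of_norm_bounded fun i => ?_
  rw [Real.norm_eq_abs, abs_mul]
  nlinarith [two_mul_le_add_sq |u i| |v i|, sq_abs (u i), sq_abs (v i)]

theorem summable_norm_of_hasSum_of_norm_le {α β E : Type*} [NormedAddCommGroup E]
    {f : α → β → E} {s : α → E} {g : α × β → ℝ} (hf : ∀ a, HasSum (f a) (s a))
    (hg : Summable g) (hfg : ∀ a b, ‖f a b‖ ≤ g (a, b)) : Summable fun a => ‖s a‖ :=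
  hg.prod.of_nonneg_of_le (fun _ => norm_nonneg _) fun a =>
    (hf a).norm_le_of_bounded (hg.prod_factor a).hasSum (hfg a)

def eHilbertBasis : HilbertBasis ℤ ℂ H := ⟨LinearIsometryEquiv.refl ℂ H⟩

lemma eHilbertBasis_apply (n : ℤ) : eHilbertBasis n = e n := by
  rw [← HilbertBasis.repr_symm_single]
  rfl

lemma hasSum_entry_mul (X Y : H →L[ℂ] H) (n : ℤ) :
    HasSum (fun k => entry X n k * entry Y k n) (entry (X * Y) n n) := by
  have h := eHilbertBasis.hasSum_inner_mul_inner (ContinuousLinearMap.adjoint X (e n)) (Y (e n))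
  simp only [eHilbertBasis_apply, ContinuousLinearMap.adjoint_inner_left] at h
  simpa only [entry, mul_apply_eq_comp] using h

lemma hasSum_diag_commutator (X Y : H →L[ℂ] H) (n : ℤ) :
    HasSum (fun k => entry X n k * entry Y k n - entry Y n k * entry X k n)
      (diag (X * Y - Y * X) n) := by
  have h : diag (X * Y - Y * X) n = entry (X * Y) n n - entry (Y * X) n n :=
    inner_sub_right _ _ _
  exact h ▸ (hasSum_entry_mul X Y n).sub (hasSum_entry_mul Y X n)

/-- The norm of the `(i, j)` entry of `[D, X]`. -/
def normCommDEntry (X : H →L[ℂ] H) (i j : ℤ) : ℝ := ‖((i : ℂ) - (j : ℂ)) * entry X i j‖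

lemma norm_entry_le_normCommDEntry (X : H →L[ℂ] H) {i j : ℤ} (h : i ≠ j) :
    ‖entry X i j‖ ≤ normCommDEntry X i j := by
  have hdist : (1 : ℝ) ≤ ‖(i : ℂ) - (j : ℂ)‖ := by
    rw [← Int.cast_sub, Complex.norm_intCast]
    exact_mod_cast Int.one_le_abs (sub_ne_zero.mpr h)
  rw [normCommDEntry, norm_mul]
  exact le_mul_of_one_le_left (norm_nonneg _) hdist

lemma norm_commutator_term_le (X Y : H →L[ℂ] H) (n k : ℤ) :
    ‖entry X n k * entry Y k n - entry Y n k * entry X k n‖ ≤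
      normCommDEntry X n k * normCommDEntry Y k n +
        normCommDEntry Y n k * normCommDEntry X k n := by
  rcases eq_or_ne n k with rfl | hnk
  · simp [normCommDEntry, mul_comm]
  have hXnk := norm_entry_le_normCommDEntry X hnk
  have hXkn := norm_entry_le_normCommDEntry X hnk.symm
  have hYnk := norm_entry_le_normCommDEntry Y hnk
  have hYkn := norm_entry_le_normCommDEntry Y hnk.symm
  calc ‖entry X n k * entry Y k n - entry Y n k * entry X k n‖
      ≤ ‖entry X n k‖ * ‖entry Y k n‖ + ‖entry Y n k‖ * ‖entry X k n‖ :=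
        (norm_sub_le _ _).trans_eq (by rw [norm_mul, norm_mul])
    _ ≤ _ := add_le_add (mul_le_mul hXnk hYkn (norm_nonneg _) ((norm_nonneg _).trans hXnk))
        (mul_le_mul hYnk hXkn (norm_nonneg _) ((norm_nonneg _).trans hYnk))

lemma InG.summable_mul_swap {X Y : H →L[ℂ] H} (hX : InG X) (hY : InG Y) :
    Summable fun p : ℤ × ℤ => normCommDEntry X p.1 p.2 * normCommDEntry Y p.2 p.1 :=
  Summable.mul_of_summable_sq hX ((Equiv.prodComm ℤ ℤ).summable_iff.mpr hY)

/-- Any continuous linear functional `Λ` on `ℓ∞` vanishing on `ℓ¹` defines a trace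
on the Lie algebra `𝔤`: applied to the diagonal sequence of a commutator of two
elements of `𝔤` it gives zero. -/
theorem generalized_limit_is_trace (Λ : lp (fun _ : ℤ => ℂ) ⊤ →L[ℂ] ℂ)
    (hΛ : ∀ f : lp (fun _ : ℤ => ℂ) ⊤, Summable (fun n => ‖f n‖) → Λ f = 0)
    (X Y : H →L[ℂ] H) (hX : InG X) (hY : InG Y) :
    Λ (diag (X * Y - Y * X)) = 0 :=
  hΛ _ <| summable_norm_of_hasSum_of_norm_le (hasSum_diag_commutator X Y)
    ((hX.summable_mul_swap hY).add (hY.summable_mul_swap hX)) (norm_commutator_term_le X Y)
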